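/- For natural numbers i and j with i < j ≤ 2^n − 1, the set F_i = {M : val(M) < i} ∪ {⊤} is a strict subset of F_j = {M : val(M) < j} ∪ {⊤}. In particular, the family (F_i) for 1 ≤ i ≤ 2^n − 1 is a strictly increasing chain of 2^n − 1 model sets of definite Boolean functions over n variables. -/
import Mathlib


/-- The binary value of an `n`-ary model `M : Fin n → Bool`. -/
def mval {n : ℕ} (M : Fin n → Bool) : ℕ :=
  ∑ i : Fin n, if M i then 2 ^ (i : ℕ) else 0

/-- The set `F_i = {M | mval M < i} ∪ {⊤}` of `n`-ary models. -/
def Fset (n i : ℕ) : Set (Fin n → Bool) :=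
  {M | mval M < i} ∪ {fun _ => true}

theorem mval_testBit (n : ℕ) : ∀ i, i < 2 ^ n → mval (fun k : Fin n => i.testBit k) = i := by
  induction n with
  | zero =>
    intro i hi
    interval_cases i
    simp [mval]
  | succ n ih =>
    intro i hi
    have hdiv : i / 2 < 2 ^ n := by
      rw [Nat.div_lt_iff_lt_mul (by norm_num)]
      calc i < 2 ^ (n + 1) := hi
        _ = 2 ^ n * 2 := by ring
    have := ih (i / 2) hdiv
    unfold mval at *
    rw [Fin.sum_univ_succ]
    have hsucc : ∀ k : Fin n,
        (if i.testBit ((Fin.succ k : Fin (n+1)) : ℕ) then 2 ^ ((Fin.succ k : Fin (n+1)) : ℕ) else 0)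
          = 2 * (if (i / 2).testBit (k : ℕ) then 2 ^ (k : ℕ) else 0) := by
      intro k
      rw [Fin.val_succ, Nat.testBit_succ]
      split <;> ring
    rw [Finset.sum_congr rfl (fun k _ => hsucc k), ← Finset.mul_sum, this]
    have := Nat.div_add_mod i 2
    rcases Nat.mod_two_eq_zero_or_one i with h | h <;>
      simp [Nat.testBit_zero, Nat.testBit, h] <;> omega

theorem mval_top (n : ℕ) : mval (fun _ : Fin n => true) = 2 ^ n - 1 := by
  unfold mval
  simp [Fin.sum_univ_eq_sum_range, Nat.geomSum_eq (le_refl 2)]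

/-- For `i < j ≤ 2^n − 1` the set `F_i` is a strict subset of `F_j`; hence the
family `(F_i)` for `1 ≤ i ≤ 2^n − 1` is a strictly increasing chain of
`2^n − 1` model sets. -/
theorem Fset_ssubset (n i j : ℕ) (hij : i < j) (hj : j ≤ 2 ^ n - 1) :
    Fset n i ⊂ Fset n j := by
  have h2 : 1 ≤ 2 ^ n := Nat.one_le_two_pow
  have hi_lt : i < 2 ^ n - 1 := lt_of_lt_of_le hij hj
  have hi2 : i < 2 ^ n := lt_of_lt_of_le hi_lt (Nat.sub_le _ _)
  constructor
  · intro M hM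
    rcases hM with h | h
    · exact Or.inl (lt_trans h hij)
    · exact Or.inr h
  · intro hsub
    -- the model with value i
    set M : Fin n → Bool := fun k => i.testBit k with hMdef
    have hval : mval M = i := mval_testBit n i hi2
    have hMj : M ∈ Fset n j := Or.inl (by simpa [hval] using hij)
    have hMi : M ∈ Fset n i := hsub hMj
    rcases hMi with h | h
    · exact absurd (hval ▸ h) (lt_irrefl i)
    · have : mval M = 2 ^ n - 1 := by
        rw [show M = (fun _ => true) from h]; exact mval_top n
      omega
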